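/- arXiv:1708.03243 — 3 statements merged into one kernel-verified Lean document; each statement's English description precedes it below -/
import Mathlib

section
/- Let g : B^N × B^N → B^N be any map. If the directed graph G̃_g is strongly connected (every vertex can be reached from every vertex by a directed path), then the map G_g is strongly transitive on (X, d): for all points X, Y ∈ X and every ε > 0, there exist a point X' ∈ X with d(X, X') < ε and an integer n ∈ ℕ such that G_g^{∘n}(X') = Y. -/
open scoped BigOperators

/-- N-bit blocks: Boolean vectors of length N. -/
abbrev Block (N : ℕ) := Fin N → Bool

/-- Infinite sequences of N-bit blocks. -/
abbrev Msg (N : ℕ) := ℕ → Block N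

/-- The phase space X = B^N × S_N. -/
abbrev Phase (N : ℕ) := Block N × Msg N

/-- Hamming distance d_e on B^N. -/
noncomputable def dE {N : ℕ} (x y : Block N) : ℝ :=
  ∑ j : Fin N, if x j = y j then (0 : ℝ) else 1

/-- Distance d_m on message sequences. -/
noncomputable def dM {N : ℕ} (m m' : Msg N) : ℝ :=
  (9 / (N : ℝ)) * ∑' k : ℕ, (∑ i : Fin N, if m k i = m' k i then (0 : ℝ) else 1) / 10 ^ (k + 1)

/-- The distance d on the phase space X. -/
noncomputable def dX {N : ℕ} (P Q : Phase N) : ℝ :=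
  dE P.1 Q.1 + dM P.2 Q.2

/-- The shift on message sequences. -/
def shiftMsg {N : ℕ} (m : Msg N) : Msg N := fun k => m (k + 1)

/-- The dynamical system G_g(x, m) = (g(m^0, x), σ(m)). -/
def Gg {N : ℕ} (g : Block N → Block N → Block N) (P : Phase N) : Phase N :=
  (g (P.2 0) P.1, shiftMsg P.2)

/-
A strongly connected control graph lets one steer the state from anywhere to anywhere by a
finite word of blocks. Given `(x, m)`, `(y, m')` and `K` with `10⁻ᴷ < ε`, keep the first `K`
blocks of `m` (which moves the point by at most `10⁻ᴷ` in `d_m`), follow them with a word `w`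
steering the state reached after `K` steps to `y`, and then with `m'`. After `K + |w|` steps
`G_g` lands exactly on `(y, m')`.
-/

theorem Relation.ReflTransGen.exists_foldl_flip_eq {α β : Type*} {f : α → β → β} {x y : β}
    (h : Relation.ReflTransGen (fun a b => ∃ u, f u a = b) x y) :
    ∃ us : List α, us.foldl (flip f) x = y := by
  induction h with
  | refl => exact ⟨[], rfl⟩
  | tail _ hstep ih =>
    obtain ⟨us, rfl⟩ := ih
    obtain ⟨u, rfl⟩ := hstep
    exact ⟨us ++ [u], List.foldl_concat ..⟩

theorem tsum_le_of_eq_zero_of_le_geometric {f : ℕ → ℝ} {C r : ℝ} {K : ℕ}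
    (hr₀ : 0 ≤ r) (hr₁ : r < 1) (hf₀ : ∀ k, 0 ≤ f k) (hfK : ∀ k < K, f k = 0)
    (hf : ∀ k, f k ≤ C * r ^ k) :
    ∑' k, f k ≤ C * r ^ K / (1 - r) := by
  have hgeom := summable_geometric_of_lt_one hr₀ hr₁
  have hsum : Summable f := .of_nonneg_of_le hf₀ hf (hgeom.mul_left C)
  have hhead : ∑ k ∈ Finset.range K, f k = 0 :=
    Finset.sum_eq_zero fun k hk => hfK k (Finset.mem_range.1 hk)
  calc ∑' k, f k = ∑' k, f (k + K) := by rw [← hsum.sum_add_tsum_nat_add K, hhead, zero_add]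
    _ ≤ ∑' k, C * r ^ K * r ^ k :=
        Summable.tsum_le_tsum (fun k => (hf _).trans_eq (by ring))
          ((summable_nat_add_iff K).2 hsum) (hgeom.mul_left _)
    _ = C * r ^ K / (1 - r) := by rw [tsum_mul_left, tsum_geometric_of_lt_one hr₀ hr₁, div_eq_mul_inv]

section

variable {N : ℕ}

theorem dE_self (x : Block N) : dE x x = 0 := by simp [dE]

theorem dE_nonneg (x y : Block N) : 0 ≤ dE x y :=
  Finset.sum_nonneg fun _ _ => by split <;> norm_num

theorem dE_le_card (x y : Block N) : dE x y ≤ N :=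
  (Finset.sum_le_sum fun j _ => show (if x j = y j then (0 : ℝ) else 1) ≤ 1 by
    split <;> norm_num).trans_eq (by simp)

theorem dM_le_of_forall_lt_eq {m m' : Msg N} {K : ℕ} (h : ∀ k < K, m k = m' k) :
    dM m m' ≤ (1 / 10) ^ K := by
  have hsum : ∑' k, dE (m k) (m' k) / 10 ^ (k + 1) ≤ N / 10 * (1 / 10) ^ K / (1 - 1 / 10) := by
    refine tsum_le_of_eq_zero_of_le_geometric (by norm_num) (by norm_num)
      (fun k => by have := dE_nonneg (m k) (m' k); positivity)
      (fun k hk => by simp [h k hk, dE_self]) fun k => ?_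
    calc dE (m k) (m' k) / 10 ^ (k + 1) ≤ N / 10 ^ (k + 1) := by gcongr; exact dE_le_card ..
      _ = N / 10 * (1 / 10) ^ k := by rw [one_div_pow, pow_succ]; field_simp
  calc dM m m' = 9 / N * ∑' k, dE (m k) (m' k) / 10 ^ (k + 1) := rfl
    _ ≤ 9 / N * (N / 10 * (1 / 10) ^ K / (1 - 1 / 10)) := by gcongr
    _ = N / N * (1 / 10) ^ K := by ring
    _ ≤ (1 / 10) ^ K := mul_le_of_le_one_left (by positivity) (div_self_le_one _)

theorem Gg_iterate_apply (g : Block N → Block N → Block N) (n : ℕ) (x : Block N)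
    (m : Stream' (Block N)) :
    (Gg g)^[n] (x, m) = ((Stream'.take n m).foldl (flip g) x, Stream'.drop n m) := by
  induction n generalizing x m with
  | zero => rfl
  | succ n ih => exact ih _ _

end

theorem Gg_strongly_transitive_of_strongly_connected_general
    {N : ℕ} (g : Block N → Block N → Block N)
    (hsc : ∀ x y : Block N, Relation.ReflTransGen (fun a b => ∃ m : Block N, g m a = b) x y) :
    ∀ (P Q : Phase N) (ε : ℝ), 0 < ε →
      ∃ (P' : Phase N) (n : ℕ), dX P P' < ε ∧ (Gg g)^[n] P' = Q := by
  rintro ⟨x, m⟩ ⟨y, m'⟩ ε hε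
  -- `Msg N` unfolds to `Stream' (Block N)`; retyping lets `rw` use the `Stream'` API.
  change Stream' (Block N) at m m'
  obtain ⟨K, hK⟩ := exists_pow_lt_of_lt_one hε (by norm_num : (1 / 10 : ℝ) < 1)
  obtain ⟨us, hus⟩ := (hsc ((Stream'.take K m).foldl (flip g) x) y).exists_foldl_flip_eq
  set w := Stream'.take K m ++ us
  refine ⟨(x, w ++ₛ m'), w.length, ?_, ?_⟩
  · have hagree : ∀ k < K, m.get k = (w ++ₛ m').get k := fun k hk => by
      rw [Stream'.get_append_left _ _ _ (by simp [w]; omega),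
        List.getElem_append_left (by simpa using hk), Stream'.take_get]
    calc dX (x, m) (x, w ++ₛ m') = dM m (w ++ₛ m') := by simp [dX, dE_self]
      _ ≤ (1 / 10) ^ K := dM_le_of_forall_lt_eq hagree
      _ < ε := hK
  · rw [Gg_iterate_apply, Stream'.take_append_of_le_length _ _ _ le_rfl, List.take_length,
      Stream'.drop_append_stream, List.foldl_append]
    exact Prod.ext hus rfl

/-- if the directed graph of g is strongly connected, then G_g is
strongly transitive on (X, d). -/
theorem Gg_strongly_transitive_of_strongly_connected
    {N : ℕ} (hN : 1 ≤ N) (g : Block N → Block N → Block N)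
    (hsc : ∀ x y : Block N, Relation.ReflTransGen (fun a b => ∃ m : Block N, g m a = b) x y) :
    ∀ (P Q : Phase N) (ε : ℝ), 0 < ε →
      ∃ (P' : Phase N) (n : ℕ), dX P P' < ε ∧ (Gg g)^[n] P' = Q :=
  Gg_strongly_transitive_of_strongly_connected_general g hsc
end

section
/- Let g : B^N × B^N → B^N be any map. If the directed graph G̃_g is strongly connected (every vertex can be reached from every vertex by a directed path), then G_g is regular on (X, d): the set of periodic points of G_g (points P such that G_g^{∘n}(P) = P for some n ≥ 1) is dense in X. -/
open scoped BigOperators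

/-!
Periodic points are produced by closing up prefixes of message sequences. Given `(x, m)` and a
precision `10⁻ᴷ`, read the first `K` blocks of `m` from `x`, reaching some state `y`; strong
connectivity supplies a word of blocks driving `y` back to `x`. Repeating forever the prefix
followed by that word gives a message `m'` for which `(x, m')` is periodic, and `m'` agrees with
`m` on its first `K` blocks, so `d((x, m), (x, m')) ≤ 10⁻ᴷ`.
-/

section Run

variable {α β : Type*} (g : β → α → α)

def run (m : ℕ → β) (x : α) : ℕ → α
  | 0 => x
  | n + 1 => g (m n) (run m x n)

variable {g}

theorem run_congr {m m' : ℕ → β} {n : ℕ} (h : ∀ k < n, m k = m' k) (x : α) :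
    run g m x n = run g m' x n := by
  induction n with
  | zero => rfl
  | succ n ih => simp only [run, ih fun k hk => h k (by omega), h n (by omega)]

theorem run_add (m : ℕ → β) (x : α) (a b : ℕ) :
    run g m x (a + b) = run g (fun k => m (a + k)) (run g m x a) b := by
  induction b with
  | zero => rfl
  | succ b ih => rw [← Nat.add_assoc, run, ih, run]

theorem exists_run_eq_of_reflTransGen [Nonempty β] {x y : α}
    (h : Relation.ReflTransGen (fun a b => ∃ u : β, g u a = b) x y) :
    ∃ (w : ℕ → β) (n : ℕ), run g w x n = y := by
  induction h with
  | refl => exact ⟨fun _ => Classical.arbitrary β, 0, rfl⟩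
  | tail _ hstep ih =>
    obtain ⟨w, n, hw⟩ := ih
    obtain ⟨u, rfl⟩ := hstep
    refine ⟨Function.update w n u, n + 1, ?_⟩
    rw [run, Function.update_self, ← hw,
      run_congr fun k hk => Function.update_of_ne (Nat.ne_of_lt hk) _ _]

def splice (K : ℕ) (m w : ℕ → β) : ℕ → β := fun k => if k < K then m k else w (k - K)

theorem splice_of_lt {K k : ℕ} (hk : k < K) (m w : ℕ → β) : splice K m w k = m k :=
  if_pos hk

theorem run_splice (K L : ℕ) (m w : ℕ → β) (x : α) :
    run g (splice K m w) x (K + L) = run g w (run g m x K) L := by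
  rw [run_add, run_congr (fun k hk => splice_of_lt hk m w)]
  exact run_congr (fun k _ => by simp [splice]) _

end Run

theorem iterate_Gg {N : ℕ} (g : Block N → Block N → Block N) (P : Phase N) (n : ℕ) :
    (Gg g)^[n] P = (run g P.2 P.1 n, fun k => P.2 (k + n)) := by
  induction n with
  | zero => rfl
  | succ n ih =>
    rw [Function.iterate_succ_apply', ih]
    exact Prod.ext (by simp [Gg, run]) (funext fun k => congrArg P.2 (by omega))

theorem isPeriodicPt_Gg_of_run_eq {N : ℕ} {g : Block N → Block N → Block N} {u : Msg N}
    {x : Block N} {p : ℕ} (hret : run g u x p = x) :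
    Function.IsPeriodicPt (Gg g) p (x, fun k => u (k % p)) := by
  refine (iterate_Gg g _ p).trans (Prod.ext ?_ (funext fun k => by simp))
  exact (run_congr (fun k hk => congrArg u (Nat.mod_eq_of_lt hk)) x).trans hret

section Distance

variable {N : ℕ}

theorem dM_le_of_eq_of_lt {m m' : Msg N} {K : ℕ} (h : ∀ k < K, m k = m' k) :
    dM m m' ≤ (1 / 10 : ℝ) ^ K := by
  set f : ℕ → ℝ := fun k => dE (m k) (m' k) / 10 ^ (k + 1)
  have hf_le : ∀ k, f k ≤ N * (1 / 10 : ℝ) ^ (k + 1) := fun k => by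
    rw [one_div_pow, ← div_eq_mul_one_div]
    exact div_le_div_of_nonneg_right (dE_le_card _ _) (by positivity)
  have hgeom : Summable fun k => (N : ℝ) * (1 / 10 : ℝ) ^ (k + 1) :=
    ((summable_geometric_of_lt_one (by norm_num) (by norm_num)).comp_injective
      (add_left_injective 1)).mul_left _
  have hf : Summable f :=
    hgeom.of_nonneg_of_le (fun k => div_nonneg (dE_nonneg _ _) (by positivity)) hf_le
  have htail : ∑' k, f k = ∑' k, f (k + K) := by
    rw [← hf.sum_add_tsum_nat_add K,
      Finset.sum_eq_zero fun k hk => by simp [f, h k (Finset.mem_range.mp hk), dE_self], zero_add]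
  have htail_le : ∑' k, f (k + K) ≤ N * (1 / 10 : ℝ) ^ K / 9 := by
    calc ∑' k, f (k + K) ≤ ∑' k, (N * (1 / 10 : ℝ) ^ (K + 1)) * (1 / 10 : ℝ) ^ k :=
          ((summable_nat_add_iff K).mpr hf).tsum_le_tsum
            (fun k => (hf_le _).trans_eq (by ring))
            ((summable_geometric_of_lt_one (by norm_num) (by norm_num)).mul_left _)
      _ = N * (1 / 10 : ℝ) ^ K / 9 := by
          rw [tsum_mul_left, tsum_geometric_of_lt_one (by norm_num) (by norm_num)]
          ring
  calc dM m m' = 9 / N * ∑' k, f k := rfl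
    _ ≤ 9 / N * (N * (1 / 10 : ℝ) ^ K / 9) := by rw [htail]; gcongr
    _ ≤ (1 / 10 : ℝ) ^ K := by
        rcases N.eq_zero_or_pos with rfl | _
        · simp -- `9 / 0 = 0` in `ℝ`
        · field_simp; rfl

end Distance

theorem Gg_regular_of_strongly_connected_general
    {N : ℕ} (g : Block N → Block N → Block N)
    (hsc : ∀ x y : Block N, Relation.ReflTransGen (fun a b => ∃ m : Block N, g m a = b) x y) :
    ∀ (P : Phase N) (ε : ℝ), 0 < ε →
      ∃ (Q : Phase N) (n : ℕ), 1 ≤ n ∧ (Gg g)^[n] Q = Q ∧ dX P Q < ε := by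
  rintro ⟨x, m⟩ ε hε
  obtain ⟨K, hK⟩ := exists_pow_lt_of_lt_one hε (by norm_num : (1 / 10 : ℝ) < 1)
  obtain ⟨w, L, hw⟩ := exists_run_eq_of_reflTransGen (hsc (run g m x (K + 1)) x)
  set p := K + 1 + L
  have hret : run g (splice (K + 1) m w) x p = x := by rw [run_splice, hw]
  have hagree : ∀ k < K + 1, m k = splice (K + 1) m w (k % p) := fun k hk => by
    rw [Nat.mod_eq_of_lt (by omega), splice_of_lt hk]
  refine ⟨_, p, by omega, isPeriodicPt_Gg_of_run_eq hret, ?_⟩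
  calc dX (x, m) _ = dM m _ := by simp [dX, dE_self]
    _ ≤ (1 / 10 : ℝ) ^ (K + 1) := dM_le_of_eq_of_lt hagree
    _ < ε := (pow_le_pow_of_le_one (by norm_num) (by norm_num) K.le_succ).trans_lt hK

/-- if the directed graph of g is strongly connected, then G_g is regular:
the set of periodic points of G_g is dense in X. -/
theorem Gg_regular_of_strongly_connected
    {N : ℕ} (hN : 1 ≤ N) (g : Block N → Block N → Block N)
    (hsc : ∀ x y : Block N, Relation.ReflTransGen (fun a b => ∃ m : Block N, g m a = b) x y) :
    ∀ (P : Phase N) (ε : ℝ), 0 < ε →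
      ∃ (Q : Phase N) (n : ℕ), 1 ≤ n ∧ (Gg g)^[n] Q = Q ∧ dX P Q < ε :=
  Gg_regular_of_strongly_connected_general g hsc
end

section
/- For the CBC mode of operation and every integer n ≥ 1, there exists an (n, 1)-separated set for G_g in X of cardinality 2^{N·n}: a set E ⊆ X with |E| = 2^{N·n} such that any two distinct points P, Q ∈ E satisfy max_{0 ≤ i < n} d(G_g^{∘i}(P), G_g^{∘i}(Q)) ≥ 1. (One such set consists of the points (x, m) where x ∈ B^N and the first n−1 blocks m^0, …, m^{n−2} range over all of (B^N)^{n−1}, all remaining blocks being the zero block.) -/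
open scoped BigOperators

/-- The CBC iterate function g(m, x) = E_k(x ⊕ m), with ⊕ the bitwise XOR. -/
def cbcG {N : ℕ} (Ek : Block N → Block N) (m x : Block N) : Block N :=
  Ek (fun j => Bool.xor (x j) (m j))

/-
Two distinct points (x, m) whose messages vanish from block n - 1 on differ either in x or in
some block m^k with k < n - 1. A difference in x is seen at time 0. If the state orbits agree
at time k but the blocks m^k differ, the states at time k + 1 differ, since m ↦ E_k(x ⊕ m) is
injective. Differing states are at Hamming distance, hence d-distance, at least 1.
-/

section Orbit

variable {N : ℕ} (g : Block N → Block N → Block N)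

lemma Gg_iterate_snd (P : Phase N) (i k : ℕ) : ((Gg g)^[i] P).2 k = P.2 (k + i) := by
  induction i generalizing P with
  | zero => rfl
  | succ i ih =>
    rw [Function.iterate_succ_apply, ih]
    simp only [Gg, shiftMsg, Nat.add_assoc]

lemma Gg_iterate_succ_fst (P : Phase N) (i : ℕ) :
    ((Gg g)^[i + 1] P).1 = g (P.2 i) ((Gg g)^[i] P).1 := by
  rw [Function.iterate_succ_apply']
  simp [Gg, Gg_iterate_snd]

lemma exists_Gg_iterate_fst_ne (hg : ∀ x, Function.Injective fun m => g m x)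
    {P Q : Phase N} {k : ℕ} (hk : P.2 k ≠ Q.2 k) :
    ∃ i ≤ k + 1, ((Gg g)^[i] P).1 ≠ ((Gg g)^[i] Q).1 := by
  by_cases hstate : ((Gg g)^[k] P).1 = ((Gg g)^[k] Q).1
  · refine ⟨k + 1, le_rfl, ?_⟩
    rw [Gg_iterate_succ_fst, Gg_iterate_succ_fst, hstate]
    exact (hg _).ne hk
  · exact ⟨k, Nat.le_succ k, hstate⟩

end Orbit

lemma cbcG_injective_left {N : ℕ} {Ek : Block N → Block N} (hEk : Function.Injective Ek)
    (x : Block N) : Function.Injective fun m => cbcG Ek m x := by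
  intro m m' h
  funext j
  simpa using congrFun (hEk h) j

lemma one_le_dE_of_ne {N : ℕ} {x y : Block N} (h : x ≠ y) : 1 ≤ dE x y := by
  obtain ⟨j, hj⟩ := Function.ne_iff.mp h
  calc (1 : ℝ) = if x j = y j then 0 else 1 := (if_neg hj).symm
    _ ≤ dE x y := Finset.single_le_sum (f := fun j => if x j = y j then (0 : ℝ) else 1)
        (fun _ _ => by positivity) (Finset.mem_univ j)

lemma dM_nonneg {N : ℕ} (m m' : Msg N) : 0 ≤ dM m m' :=
  mul_nonneg (by positivity) (tsum_nonneg fun _ => by positivity)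

lemma one_le_dX_of_fst_ne {N : ℕ} {P Q : Phase N} (h : P.1 ≠ Q.1) : 1 ≤ dX P Q :=
  le_add_of_le_of_nonneg (one_le_dE_of_ne h) (dM_nonneg _ _)

def zeroPadMsg {N n : ℕ} (ms : Fin n → Block N) : Msg N :=
  fun k => if h : k < n then ms ⟨k, h⟩ else fun _ => false

lemma zeroPadMsg_injective {N n : ℕ} : Function.Injective (zeroPadMsg (N := N) (n := n)) := by
  intro ms ms' h
  funext ⟨k, hk⟩
  simpa [zeroPadMsg, hk] using congrFun h k

def zeroPadPhase {N n : ℕ} (p : Block N × (Fin n → Block N)) : Phase N :=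
  (p.1, zeroPadMsg p.2)

lemma zeroPadPhase_injective {N n : ℕ} : Function.Injective (zeroPadPhase (N := N) (n := n)) :=
  Function.Injective.prodMap Function.injective_id zeroPadMsg_injective

lemma ncard_range_zeroPadPhase (N n : ℕ) :
    (Set.range (zeroPadPhase (N := N) (n := n))).ncard = 2 ^ (N * (n + 1)) := by
  rw [Set.ncard_range_of_injective zeroPadPhase_injective, Nat.card_eq_fintype_card]
  simp [pow_mul, pow_succ, mul_comm]

lemma exists_Gg_iterate_fst_ne_zeroPadPhase {N n : ℕ} {g : Block N → Block N → Block N}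
    (hg : ∀ x, Function.Injective fun m => g m x) {p q : Block N × (Fin n → Block N)}
    (hpq : p ≠ q) :
    ∃ i < n + 1, ((Gg g)^[i] (zeroPadPhase p)).1 ≠ ((Gg g)^[i] (zeroPadPhase q)).1 := by
  by_cases hx : p.1 = q.1
  · obtain ⟨k, hk⟩ := Function.ne_iff.mp fun hms => hpq (Prod.ext hx hms)
    have hblock : (zeroPadPhase p).2 k ≠ (zeroPadPhase q).2 k := by
      simpa [zeroPadPhase, zeroPadMsg] using hk
    obtain ⟨i, hi, hne⟩ := exists_Gg_iterate_fst_ne g hg hblock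
    exact ⟨i, by omega, hne⟩
  · exact ⟨0, Nat.succ_pos n, hx⟩

theorem cbc_separated_set_general
    {N : ℕ} (Ek : Block N → Block N) (hEk : Function.Bijective Ek) :
    ∀ n : ℕ, 1 ≤ n → ∃ E : Set (Phase N), E.ncard = 2 ^ (N * n) ∧
      ∀ P ∈ E, ∀ Q ∈ E, P ≠ Q →
        ∃ i : ℕ, i < n ∧ 1 ≤ dX ((Gg (cbcG Ek))^[i] P) ((Gg (cbcG Ek))^[i] Q) := by
  intro n hn
  obtain ⟨n, rfl⟩ : ∃ k, n = k + 1 := ⟨n - 1, by omega⟩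
  refine ⟨Set.range zeroPadPhase, ncard_range_zeroPadPhase N n, ?_⟩
  rintro _ ⟨p, rfl⟩ _ ⟨q, rfl⟩ hPQ
  obtain ⟨i, hi, hne⟩ := exists_Gg_iterate_fst_ne_zeroPadPhase
    (cbcG_injective_left hEk.injective) fun h => hPQ (congrArg zeroPadPhase h)
  exact ⟨i, hi, one_le_dX_of_fst_ne hne⟩

/-- for the CBC mode and every n ≥ 1 there exists an (n, 1)-separated set
for G_g of cardinality 2^(N·n): distinct points of the set are at distance at least 1 for
some iterate index i < n. -/
theorem cbc_separated_set
    {N : ℕ} (hN : 1 ≤ N) (Ek : Block N → Block N) (hEk : Function.Bijective Ek) :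
    ∀ n : ℕ, 1 ≤ n → ∃ E : Set (Phase N), E.ncard = 2 ^ (N * n) ∧
      ∀ P ∈ E, ∀ Q ∈ E, P ≠ Q →
        ∃ i : ℕ, i < n ∧ 1 ≤ dX ((Gg (cbcG Ek))^[i] P) ((Gg (cbcG Ek))^[i] Q) :=
  cbc_separated_set_general Ek hEk
end
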